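/- In the same construction, if there exists a precedence-feasible spanning arborescence rooted at r, then Φ is satisfiable. Specifically: (a) the arborescence contains no directed path from s' to t; (b) the unique path P from r to t passes through s and through exactly one literal vertex of each clause layer; (c) no directed path of the arborescence contains two literal vertices corresponding to a variable and its negation; hence assigning true to all variables whose (unnegated) literals appear on P ∩ C, and false to all remaining variables, satisfies every clause. -/

import Mathlib

def IsPathIn {V : Type*} (T : Set (V × V)) (r j : V) (p : List V) : Prop :=
  p.head? = some r ∧ p.getLast? = some j ∧ p.Chain' (fun a b => (a, b) ∈ T)

def IsSpanningArborescence {V : Type*} (T : Set (V × V)) (r : V) : Prop :=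
  (∀ j : V, j ≠ r → ∃! i : V, (i, j) ∈ T) ∧ (∀ i : V, (i, r) ∉ T) ∧
    ∀ j : V, ∃! p : List V, IsPathIn T r j p

inductive SatVert (m : ℕ) : Type
  | root | s | s' | t
  | lit (i : Fin (m + 1)) (k : Fin 3)
  deriving DecidableEq

def SatArcs (m : ℕ) : Set (SatVert m × SatVert m) :=
  {a | a = (SatVert.root, SatVert.s) ∨ a = (SatVert.root, SatVert.s') ∨
    (∃ j : Fin 3, a = (SatVert.s, SatVert.lit 0 j)) ∨
    (∃ (i : Fin m) (j k : Fin 3), a = (SatVert.lit i.castSucc j, SatVert.lit i.succ k)) ∨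
    (∃ j : Fin 3, a = (SatVert.lit (Fin.last m) j, SatVert.t)) ∨
    (∃ (i : Fin (m + 1)) (j : Fin 3), a = (SatVert.s', SatVert.lit i j))}

def SatPrec (m : ℕ) (C : Fin (m + 1) → Fin 3 → ℕ × Bool) : Set (SatVert m × SatVert m) :=
  {a | a = (SatVert.t, SatVert.s') ∨
    ∃ (h i : Fin (m + 1)) (k j : Fin 3), (i : ℕ) < (h : ℕ) ∧
      (C h k).1 = (C i j).1 ∧ (C h k).2 ≠ (C i j).2 ∧
      a = (SatVert.lit h k, SatVert.lit i j)}

/-!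
Level the vertices: `root ↦ 0`, `s, s' ↦ 1`, the literals of clause `i ↦ i + 2`, `t ↦ m + 3`.
Every arc raises the level, and every arc not leaving `s'` raises it by exactly one. Hence a
path visits each level at most once, and the path from `root` to `t`, which avoids `s'` because
of the precedence `(t, s')`, visits every level, i.e. `s` and exactly one literal per clause.
A path meeting a literal of clause `h` and an opposite literal of an earlier clause `i < h` meets
the latter first, so the prefix ending at the former violates the precedence between them.
The literals on the path to `t` are therefore consistent and define a satisfying assignment.
-/
namespace IsPathIn

variable {V : Type*} {T : Set (V × V)} {r v w : V} {p x y : List V}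

theorem chain (hp : IsPathIn T r v p) : p.IsChain (fun a b => (a, b) ∈ T) := hp.2.2

theorem cons (hrw : (r, w) ∈ T) (hp : IsPathIn T w v p) : IsPathIn T r v (r :: p) := by
  obtain ⟨hhead, hlast, hchain⟩ := hp
  obtain ⟨q, rfl⟩ : ∃ q, p = w :: q := by
    cases p with
    | nil => simp at hhead
    | cons a q => exact ⟨q, by simpa using hhead⟩
  exact ⟨rfl, by rwa [List.getLast?_cons_cons], List.isChain_cons_cons.mpr ⟨hrw, hchain⟩⟩

theorem prefix_to (hp : IsPathIn T r v (x ++ w :: y)) : IsPathIn T r w (x ++ [w]) := by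
  obtain ⟨hhead, -, hchain⟩ := hp
  refine ⟨?_, by simp, hchain.prefix ⟨y, by simp⟩⟩
  cases x <;> simpa using hhead

end IsPathIn

theorem List.IsChain.exists_mem_eq_of_le_succ {α : Type*} {R : α → α → Prop} {f : α → ℕ}
    (hR : ∀ a b, R a b → f b ≤ f a + 1) :
    ∀ {l : List α} {a b : α}, l.IsChain R → l.head? = some a → l.getLast? = some b →
      ∀ n, f a ≤ n → n ≤ f b → ∃ x ∈ l, f x = n
  | [], _, _, _, ha, _, _, _, _ => by simp at ha
  | [c], a, b, _, ha, hb, n, hn₁, hn₂ => by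
    simp only [List.head?_cons, List.getLast?_singleton, Option.some.injEq] at ha hb
    subst ha hb
    exact ⟨c, by simp, by omega⟩
  | c :: d :: l, a, b, hl, ha, hb, n, hn₁, hn₂ => by
    simp only [List.head?_cons, Option.some.injEq] at ha
    subst ha
    obtain ⟨hcd, hl⟩ := List.isChain_cons_cons.mp hl
    rcases Nat.eq_or_lt_of_le hn₁ with rfl | hlt
    · exact ⟨c, by simp, rfl⟩
    · obtain ⟨x, hx, hfx⟩ := hl.exists_mem_eq_of_le_succ hR rfl
        (by rwa [List.getLast?_cons_cons] at hb) n (by have := hR _ _ hcd; omega) hn₂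
      exact ⟨x, List.mem_cons_of_mem _ hx, hfx⟩

theorem List.Pairwise.mem_left_of_lt {α β : Type*} [Preorder β] {f : α → β} {x y : List α} {w z : α}
    (hl : (x ++ w :: y).Pairwise (fun a b => f a < f b)) (hz : z ∈ x ++ w :: y)
    (hzw : f z < f w) : z ∈ x := by
  rcases List.mem_append.mp hz with hz | hz
  · exact hz
  · rcases List.mem_cons.mp hz with rfl | hz
    · exact absurd hzw (lt_irrefl _)
    · exact absurd (List.rel_of_pairwise_cons (List.pairwise_append.mp hl).2.1 hz)
        hzw.not_gt

namespace SatVert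

variable {m : ℕ} {C : Fin (m + 1) → Fin 3 → ℕ × Bool} {T : Set (SatVert m × SatVert m)}

def level : SatVert m → ℕ
  | root => 0
  | s => 1
  | s' => 1
  | lit i _ => i + 2
  | t => m + 3

theorem level_lt_of_mem_satArcs {a b : SatVert m} (h : (a, b) ∈ SatArcs m) :
    a.level < b.level := by
  rcases h with h | h | ⟨_, h⟩ | ⟨_, _, _, h⟩ | ⟨_, h⟩ | ⟨_, _, h⟩ <;>
    simp only [Prod.mk.injEq] at h <;> obtain ⟨rfl, rfl⟩ := h <;> simp [level]

theorem level_le_succ_of_mem_satArcs {a b : SatVert m} (h : (a, b) ∈ SatArcs m)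
    (ha : a ≠ s') : b.level ≤ a.level + 1 := by
  rcases h with h | h | ⟨_, h⟩ | ⟨_, _, _, h⟩ | ⟨_, h⟩ | ⟨_, _, h⟩ <;>
    simp only [Prod.mk.injEq] at h <;> obtain ⟨rfl, rfl⟩ := h <;> simp_all [level]

theorem eq_root_of_mem_satArcs {u : SatVert m} (h : (u, s') ∈ SatArcs m) : u = root := by
  rcases h with h | h | ⟨_, h⟩ | ⟨_, _, _, h⟩ | ⟨_, h⟩ | ⟨_, _, h⟩ <;> simp_all

theorem eq_lit_of_level_eq {v : SatVert m} {i : Fin (m + 1)} (hv : v ≠ s')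
    (h : v.level = i + 2) : ∃ k, v = lit i k := by
  cases v with
  | lit i' k =>
    obtain rfl : i' = i := Fin.ext (by simp only [level] at h; omega)
    exact ⟨k, rfl⟩
  | _ => simp [level] at h hv <;> omega

theorem pairwise_level_of_isChain (hT : T ⊆ SatArcs m) {p : List (SatVert m)}
    (hp : p.IsChain (fun a b => (a, b) ∈ T)) : p.Pairwise (fun a b => a.level < b.level) :=
  List.pairwise_map.mp (List.IsChain.pairwise (List.isChain_map_of_isChain level
    (fun _ _ h => level_lt_of_mem_satArcs (hT h)) hp))

theorem eq_of_mem_of_level_eq (hT : T ⊆ SatArcs m) {p : List (SatVert m)}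
    (hp : p.IsChain (fun a b => (a, b) ∈ T)) {x y : SatVert m} (hx : x ∈ p) (hy : y ∈ p)
    (hxy : x.level = y.level) : x = y :=
  List.inj_on_of_nodup_map
    ((List.pairwise_map.mpr (pairwise_level_of_isChain hT hp)).imp ne_of_lt) hx hy hxy

theorem not_exists_path_s'_t (hT : T ⊆ SatArcs m) (harb : IsSpanningArborescence T root)
    (hfeas : ∀ q ∈ SatPrec m C, ∀ p, IsPathIn T root q.1 p → q.2 ∉ p) :
    ¬ ∃ p, IsPathIn T s' t p := by
  rintro ⟨p, hp⟩
  obtain ⟨u, hu, -⟩ := harb.1 s' (by simp)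
  obtain rfl := eq_root_of_mem_satArcs (hT hu)
  exact hfeas _ (Or.inl rfl) _ (hp.cons hu) (List.mem_cons_of_mem _ (List.mem_of_mem_head? hp.1))

theorem mem_path_root_t (hT : T ⊆ SatArcs m) {p : List (SatVert m)}
    (hp : IsPathIn T root t p) (hs' : s' ∉ p) :
    s ∈ p ∧ ∀ i : Fin (m + 1), ∃! k : Fin 3, lit i k ∈ p := by
  have hne {x : SatVert m} (hx : x ∈ p) : x ≠ s' := ne_of_mem_of_not_mem hx hs'
  have hstep : p.IsChain (fun a b => (a, b) ∈ T ∧ a ≠ s') :=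
    hp.chain.imp_of_mem_imp fun a _ ha _ hab => ⟨hab, hne ha⟩
  have hlevel (n : ℕ) (hn : n ≤ m + 3) : ∃ x ∈ p, x.level = n :=
    hstep.exists_mem_eq_of_le_succ (fun _ _ h => level_le_succ_of_mem_satArcs (hT h.1) h.2)
      hp.1 hp.2.1 n (Nat.zero_le n) hn
  constructor
  · obtain ⟨x, hx, hlx⟩ := hlevel 1 (by omega)
    cases x <;> simp_all [level]
  · intro i
    obtain ⟨x, hx, hlx⟩ := hlevel (i + 2) (by omega)
    obtain ⟨k, rfl⟩ := eq_lit_of_level_eq (hne hx) hlx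
    exact ⟨k, hx, fun k' hk' => by
      simpa using eq_of_mem_of_level_eq hT hp.chain hk' hx (by simp [level])⟩

theorem sign_eq_of_mem_path_of_lt (hT : T ⊆ SatArcs m)
    (hfeas : ∀ q ∈ SatPrec m C, ∀ p, IsPathIn T root q.1 p → q.2 ∉ p)
    {v : SatVert m} {p : List (SatVert m)} (hp : IsPathIn T root v p)
    {h i : Fin (m + 1)} {k j : Fin 3} (hih : i < h) (hh : lit h k ∈ p) (hi : lit i j ∈ p)
    (hvar : (C h k).1 = (C i j).1) : (C h k).2 = (C i j).2 := by
  by_contra hsign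
  obtain ⟨x, y, rfl⟩ := List.append_of_mem hh
  have hix : lit i j ∈ x := (pairwise_level_of_isChain hT hp.chain).mem_left_of_lt hi
    (by simpa [level] using hih)
  exact hfeas _ (Or.inr ⟨h, i, k, j, hih, hvar, hsign, rfl⟩) _ hp.prefix_to
    (List.mem_append_left _ hix)

theorem sign_eq_of_mem_path (hT : T ⊆ SatArcs m)
    (hfeas : ∀ q ∈ SatPrec m C, ∀ p, IsPathIn T root q.1 p → q.2 ∉ p)
    {v : SatVert m} {p : List (SatVert m)} (hp : IsPathIn T root v p)
    {h i : Fin (m + 1)} {k j : Fin 3} (hh : lit h k ∈ p) (hi : lit i j ∈ p)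
    (hvar : (C h k).1 = (C i j).1) : (C h k).2 = (C i j).2 := by
  rcases lt_trichotomy i h with hih | rfl | hhi
  · exact sign_eq_of_mem_path_of_lt hT hfeas hp hih hh hi hvar
  · obtain ⟨-, rfl⟩ := lit.inj (eq_of_mem_of_level_eq hT hp.chain hh hi (by simp [level]))
    rfl
  · exact (sign_eq_of_mem_path_of_lt hT hfeas hp hhi hi hh hvar.symm).symm

end SatVert

/-- converse direction of the 3-SAT reduction: if the constructed
graph admits a precedence-feasible spanning arborescence rooted at `root`, then
(a) it contains no directed path from `s'` to `t`; (b) the path from `root` to `t`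
passes through `s` and through exactly one literal vertex of each clause layer;
(c) no directed path of the arborescence contains two literal vertices of the same
variable with opposite signs; and hence the formula is satisfiable. -/
theorem stmt8 (m : ℕ) (C : Fin (m + 1) → Fin 3 → ℕ × Bool)
    (T : Set (SatVert m × SatVert m)) (hT : T ⊆ SatArcs m)
    (harb : IsSpanningArborescence T SatVert.root)
    (hfeas : ∀ q ∈ SatPrec m C, ∀ p : List (SatVert m),
      IsPathIn T SatVert.root q.1 p → q.2 ∉ p) :
    (¬ ∃ p : List (SatVert m), IsPathIn T SatVert.s' SatVert.t p) ∧
    (∀ p : List (SatVert m), IsPathIn T SatVert.root SatVert.t p →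
      SatVert.s ∈ p ∧ ∀ i : Fin (m + 1), ∃! k : Fin 3, SatVert.lit i k ∈ p) ∧
    (∀ (v : SatVert m) (p : List (SatVert m)), IsPathIn T SatVert.root v p →
      ∀ (h i : Fin (m + 1)) (k j : Fin 3), SatVert.lit h k ∈ p → SatVert.lit i j ∈ p →
        (C h k).1 = (C i j).1 → (C h k).2 = (C i j).2) ∧
    ∃ σ : ℕ → Bool, ∀ i : Fin (m + 1), ∃ k : Fin 3, σ (C i k).1 = (C i k).2 := by
  have hpath_t (p : List (SatVert m)) (hp : IsPathIn T SatVert.root SatVert.t p) :=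
    SatVert.mem_path_root_t hT hp (hfeas _ (Or.inl rfl) _ hp)
  obtain ⟨P, hP, -⟩ := harb.2.2 SatVert.t
  choose κ hκ using fun i => ((hpath_t P hP).2 i).exists
  have hconsistent : Function.FactorsThrough (fun i => (C i (κ i)).2) (fun i => (C i (κ i)).1) :=
    fun h i hvar => SatVert.sign_eq_of_mem_path hT hfeas hP (hκ h) (hκ i) hvar
  exact ⟨SatVert.not_exists_path_s'_t hT harb hfeas, hpath_t,
    fun _ _ hp _ _ _ _ => SatVert.sign_eq_of_mem_path hT hfeas hp,
    Function.extend _ _ (fun _ => false), fun i => ⟨κ i, hconsistent.extend_apply _ i⟩⟩
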